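/- arXiv:1212.5516 — 2 statements merged into one kernel-verified Lean document; each statement's English description precedes it below -/
import Mathlib

section
/- Every nonempty subset of L₂ has a least element with respect to the lexicographical order ≺; in other words, the restriction of the lexicographical order to L₂ is a well-order. -/
/-- `L₂`: the set of triples `(m, n, r) ∈ ℤ³` corresponding to semi-positive
definite half-integral symmetric 2×2 matrices, i.e. `m ≥ 0`, `n ≥ 0`,
`4mn - r² ≥ 0`. -/
def L2 (T : ℤ × ℤ × ℤ) : Prop :=
  0 ≤ T.1 ∧ 0 ≤ T.2.1 ∧ 0 ≤ 4 * T.1 * T.2.1 - T.2.2 ^ 2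

/-- The lexicographical order `T ≻ T'` on triples `(m, n, r) ∈ ℤ³`. -/
def lexGT (T T' : ℤ × ℤ × ℤ) : Prop :=
  T.1 + T.2.1 > T'.1 + T'.2.1 ∨
  (T.1 + T.2.1 = T'.1 + T'.2.1 ∧ T.1 > T'.1) ∨
  (T.1 + T.2.1 = T'.1 + T'.2.1 ∧ T.1 = T'.1 ∧ T.2.2 > T'.2.2)

/-- The measure used to transport the lexicographic order to `ℕ³`. -/
def measureL2 (T : ℤ × ℤ × ℤ) : ℕ × ℕ × ℕ :=
  ((T.1 + T.2.1).toNat, T.1.toNat, (T.2.2 + T.1 + T.2.1).toNat)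

/-- The lex order on `ℕ³`. -/
def natLex : (ℕ × ℕ × ℕ) → (ℕ × ℕ × ℕ) → Prop :=
  Prod.Lex (· < ·) (Prod.Lex (· < ·) (· < ·))

lemma natLex_wf : WellFounded natLex :=
  WellFounded.prod_lex wellFounded_lt (WellFounded.prod_lex wellFounded_lt wellFounded_lt)

lemma measure_lt (T T' : ℤ × ℤ × ℤ) (hT : L2 T) (hT' : L2 T')
    (h : lexGT T' T) : natLex (measureL2 T) (measureL2 T') := by
  obtain ⟨hm, hn, hd⟩ := hT
  obtain ⟨hm', hn', hd'⟩ := hT'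
  unfold natLex measureL2
  rcases h with h | ⟨h1, h2⟩ | ⟨h1, h2, h3⟩
  · exact Prod.Lex.left _ _ (by omega)
  · rw [show (T.1 + T.2.1).toNat = (T'.1 + T'.2.1).toNat by omega]
    exact Prod.Lex.right _ (Prod.Lex.left _ _ (by omega))
  · have hr : -(T.1 + T.2.1) ≤ T.2.2 := by nlinarith [sq_nonneg (T.1 - T.2.1)]
    rw [show (T.1 + T.2.1).toNat = (T'.1 + T'.2.1).toNat by omega,
      show T.1.toNat = T'.1.toNat by omega]
    exact Prod.Lex.right _ (Prod.Lex.right _ (by omega))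

lemma lexGT_trichotomy (T T' : ℤ × ℤ × ℤ) (hne : T ≠ T') :
    lexGT T T' ∨ lexGT T' T := by
  have : T.1 ≠ T'.1 ∨ T.2.1 ≠ T'.2.1 ∨ T.2.2 ≠ T'.2.2 := by
    by_contra h
    push_neg at h
    exact hne (Prod.ext h.1 (Prod.ext h.2.1 h.2.2))
  unfold lexGT
  omega

/-- Every nonempty subset of `L₂` has a least element with respect to `≺`;
i.e. the restriction of the lexicographical order to `L₂` is a well-order. -/
theorem exists_least_of_nonempty (A : Set (ℤ × ℤ × ℤ))
    (hA : A ⊆ {T | L2 T}) (hne : A.Nonempty) :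
    ∃ T₀ ∈ A, ∀ T ∈ A, T = T₀ ∨ lexGT T T₀ := by
  obtain ⟨b, ⟨T₀, hT₀A, rfl⟩, hmin⟩ :=
    natLex_wf.has_min (measureL2 '' A) (hne.image _)
  refine ⟨T₀, hT₀A, fun T hT => ?_⟩
  rcases eq_or_ne T T₀ with rfl | hne'
  · exact Or.inl rfl
  · rcases lexGT_trichotomy T T₀ hne' with h | h
    · exact Or.inr h
    · exact absurd (measure_lt T T₀ (hA hT) (hA hT₀A) h)
        (hmin _ ⟨T, hT, rfl⟩)
end

section
/- Let p be a prime and let a, b : ℤ³ → ℤ be functions vanishing outside L₂. Suppose T₀ ∈ L₂ satisfies p ∤ a(T₀) and p ∣ a(T) for every T ∈ L₂ with T ≺ T₀, and suppose T₀' ∈ L₂ satisfies p ∤ b(T₀') and p ∣ b(T) for every T ∈ L₂ with T ≺ T₀'. Define the convolution c(T) = Σ a(S)·b(S'), the sum taken over all pairs (S,S') ∈ L₂ × L₂ with S + S' = T (a finite set). Then p ∤ c(T₀ + T₀'), and p ∣ c(T) for every T ∈ L₂ with T ≺ T₀ + T₀'. (Equivalently, the p-minimum matrix of a product of two Fourier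 expansions is the sum of the p-minimum matrices of the factors: m_p(F·G) = m_p(F) + m_p(G).) -/
/-- The set of decompositions of `T` into two `L₂` matrices is finite. -/
lemma decomp_finite (T : ℤ × ℤ × ℤ) (hm : 0 ≤ T.1) (hn : 0 ≤ T.2.1) :
    {S : (ℤ × ℤ × ℤ) × (ℤ × ℤ × ℤ) | L2 S.1 ∧ L2 S.2 ∧ S.1 + S.2 = T}.Finite := by
  obtain ⟨m, n, r⟩ := T
  have hbox : (Set.Icc (0:ℤ) m ×ˢ Set.Icc (0:ℤ) n ×ˢ
      Set.Icc (-(4*m*n+1)) (4*m*n+1)).Finite :=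
    (Set.finite_Icc _ _).prod ((Set.finite_Icc _ _).prod (Set.finite_Icc _ _))
  apply Set.Finite.subset (hbox.image (fun x => (x, ((m,n,r) : ℤ × ℤ × ℤ) - x)))
  rintro ⟨⟨m1, n1, r1⟩, ⟨m2, n2, r2⟩⟩ ⟨h1, h2, hsum⟩
  dsimp only [L2] at h1 h2
  obtain ⟨hm1, hn1, hd1⟩ := h1
  obtain ⟨hm2, hn2, hd2⟩ := h2
  simp only [Prod.mk_add_mk, Prod.mk.injEq] at hsum
  obtain ⟨em, en, er⟩ := hsum
  dsimp only at hm hn hm1 hn1 hd1 hm2 hn2 hd2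
  simp only [Set.mem_image, Set.mem_prod, Set.mem_Icc]
  refine ⟨(m1, n1, r1), ⟨⟨hm1, ?_⟩, ⟨hn1, ?_⟩, ?_, ?_⟩, ?_⟩
  · show m1 ≤ m; omega
  · show n1 ≤ n; omega
  · show -(4 * m * n + 1) ≤ r1
    have hmm : m1 ≤ m := by omega
    have hnn : n1 ≤ n := by omega
    nlinarith [sq_nonneg (r1 + 1), mul_nonneg hm1 hn1]
  · show r1 ≤ 4 * m * n + 1
    have hmm : m1 ≤ m := by omega
    have hnn : n1 ≤ n := by omega
    nlinarith [sq_nonneg (r1 - 1), mul_nonneg hm1 hn1]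
  · simp only [Prod.mk_sub_mk, Prod.mk.injEq]
    exact ⟨trivial, by omega, by omega, by omega⟩

lemma lexGT_split (S S' T₀ T₀' : ℤ × ℤ × ℤ) (h : lexGT (T₀ + T₀') (S + S')) :
    lexGT T₀ S ∨ lexGT T₀' S' := by
  obtain ⟨a1, a2, a3⟩ := S; obtain ⟨b1, b2, b3⟩ := S'
  obtain ⟨c1, c2, c3⟩ := T₀; obtain ⟨d1, d2, d3⟩ := T₀'
  simp only [lexGT, Prod.mk_add_mk] at *
  omega

lemma lexGT_split_ne (S S' T₀ T₀' : ℤ × ℤ × ℤ) (h : S + S' = T₀ + T₀')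
    (hne : (S, S') ≠ (T₀, T₀')) : lexGT T₀ S ∨ lexGT T₀' S' := by
  obtain ⟨a1, a2, a3⟩ := S; obtain ⟨b1, b2, b3⟩ := S'
  obtain ⟨c1, c2, c3⟩ := T₀; obtain ⟨d1, d2, d3⟩ := T₀'
  simp only [Prod.mk_add_mk, Prod.mk.injEq] at h
  simp only [ne_eq, Prod.mk.injEq, not_and] at hne
  unfold lexGT
  dsimp only
  omega

/-- Lemma 2.2 (4): the `p`-minimum matrix of a product of two Fourier
expansions is the sum of the `p`-minimum matrices of the factors:
`m_p(F·G) = m_p(F) + m_p(G)`. Here `a`, `b` are the Fourier coefficients of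
`F`, `G` (supported on `L₂`), with `p`-minimum matrices `T₀`, `T₀'`, and `c`
is their convolution, the Fourier coefficients of `F·G`. -/
theorem pMin_convolution
    (p : ℕ) (hp : p.Prime) (a b : ℤ × ℤ × ℤ → ℤ)
    (ha0 : ∀ T, ¬ L2 T → a T = 0) (hb0 : ∀ T, ¬ L2 T → b T = 0)
    (T₀ T₀' : ℤ × ℤ × ℤ) (hT₀ : L2 T₀) (hT₀' : L2 T₀')
    (haT₀ : ¬ (p : ℤ) ∣ a T₀)
    (haLt : ∀ T, L2 T → lexGT T₀ T → (p : ℤ) ∣ a T)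
    (hbT₀' : ¬ (p : ℤ) ∣ b T₀')
    (hbLt : ∀ T, L2 T → lexGT T₀' T → (p : ℤ) ∣ b T)
    (c : ℤ × ℤ × ℤ → ℤ)
    (hc : ∀ T, c T =
      ∑ᶠ S ∈ {S : (ℤ × ℤ × ℤ) × (ℤ × ℤ × ℤ) | L2 S.1 ∧ L2 S.2 ∧ S.1 + S.2 = T},
        a S.1 * b S.2) :
    ¬ (p : ℤ) ∣ c (T₀ + T₀') ∧
      ∀ T, L2 T → lexGT (T₀ + T₀') T → (p : ℤ) ∣ c T := by
  have hpZ : Prime ((p : ℤ)) := Nat.prime_iff_prime_int.mp hp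
  constructor
  · -- part 1
    have hm : 0 ≤ (T₀ + T₀').1 := by
      have := hT₀.1; have := hT₀'.1; simp [Prod.fst_add]; omega
    have hn : 0 ≤ (T₀ + T₀').2.1 := by
      have := hT₀.2.1; have := hT₀'.2.1; simp [Prod.snd_add]; omega
    have hfin := decomp_finite (T₀ + T₀') hm hn
    rw [hc, finsum_mem_eq_finite_toFinset_sum _ hfin]
    have hmem : (T₀, T₀') ∈ hfin.toFinset := by
      simp only [Set.Finite.mem_toFinset, Set.mem_setOf_eq]
      exact ⟨hT₀, hT₀', trivial⟩
    rw [← Finset.add_sum_erase _ _ hmem]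
    intro hdvd
    have hrest : (p : ℤ) ∣ ∑ S ∈ hfin.toFinset.erase (T₀, T₀'), a S.1 * b S.2 := by
      apply Finset.dvd_sum
      intro S hS
      rw [Finset.mem_erase, Set.Finite.mem_toFinset, Set.mem_setOf_eq] at hS
      obtain ⟨hne, hL1, hL2, hsum⟩ := hS
      rcases lexGT_split_ne S.1 S.2 T₀ T₀' hsum (by simpa using hne) with h | h
      · exact Dvd.dvd.mul_right (haLt _ hL1 h) _
      · exact Dvd.dvd.mul_left (hbLt _ hL2 h) _
    have : (p : ℤ) ∣ a T₀ * b T₀' := (dvd_add_right hrest).mp (by rwa [add_comm] at hdvd)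
    rcases hpZ.dvd_mul.mp this with h | h
    · exact haT₀ h
    · exact hbT₀' h
  · -- part 2
    intro T hT hlt
    have hfin := decomp_finite T hT.1 hT.2.1
    rw [hc, finsum_mem_eq_finite_toFinset_sum _ hfin]
    apply Finset.dvd_sum
    intro S hS
    rw [Set.Finite.mem_toFinset, Set.mem_setOf_eq] at hS
    obtain ⟨hL1, hL2, hsum⟩ := hS
    rcases lexGT_split S.1 S.2 T₀ T₀' (by rwa [hsum]) with h | h
    · exact Dvd.dvd.mul_right (haLt _ hL1 h) _
    · exact Dvd.dvd.mul_left (hbLt _ hL2 h) _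
end
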